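/- Let G = ℤ_{n₁} × ⋯ × ℤ_{n_d} with all n_i ≥ 2 and let S be an inverse-closed subset of G∖{(0,…,0)}. A subset C of G is a total perfect code in Cay(G, S) if and only if for each pair (I, g) with ∅ ≠ I ⊆ {1,…,d} and g = (g₁,…,g_d) ∈ G there exists a polynomial q_I^{(g)}(x₁,…,x_d) ∈ ℤ[x₁,…,x_d] divisible by (∏_{i=1}^d x_i^{g_i})·(∏_{i∈I}(x_i^{n_i} − 1)) such that f_C(x₁,…,x_d)·f_S(x₁,…,x_d) = Σ_{∅≠I⊆{1,…,d}} Σ_{g∈G} q_I^{(g)}(x₁,…,x_d) + ∏_{i=1}^d (Σ_{j=0}^{n_i−1} x_i^j). -/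

import Mathlib

/-- The Cayley graph of an additive group `G` with connection set `S`.
(When `S` is inverse-closed and does not contain `0`, `x` and `y` are adjacent
iff `y - x ∈ S`.) -/
def cayley {G : Type*} [AddGroup G] (S : Set G) : SimpleGraph G :=
  SimpleGraph.fromRel (fun x y => y - x ∈ S)

/-- A perfect code in a graph: an independent set such that every vertex outside it
has exactly one neighbour in it. -/
def IsPerfectCode {V : Type*} (Γ : SimpleGraph V) (C : Set V) : Prop :=
  (∀ x ∈ C, ∀ y ∈ C, ¬ Γ.Adj x y) ∧ ∀ v, v ∉ C → ∃! c, c ∈ C ∧ Γ.Adj v c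

/-- A total perfect code in a graph: every vertex has exactly one neighbour in it. -/
def IsTotalPerfectCode {V : Type*} (Γ : SimpleGraph V) (C : Set V) : Prop :=
  ∀ v, ∃! c, c ∈ C ∧ Γ.Adj v c

/-- The subgroup of periods of a subset `X` of an abelian group:
`{g | X + g = X}`. -/
def periods {G : Type*} [AddCommGroup G] (X : Set G) : AddSubgroup G where
  carrier := {g | ∀ x : G, x + g ∈ X ↔ x ∈ X}
  zero_mem' := by simp
  add_mem' := by
    intro a b ha hb x
    rw [← add_assoc]
    exact (hb _).trans (ha x)
  neg_mem' := by
    intro a ha x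
    have := ha (x + -a)
    simpa using this.symm

/-- `(A, B)` is a factorization of the abelian group `G`: every element of `G` can be
uniquely written as `a + b` with `a ∈ A` and `b ∈ B`. -/
def IsFactorization {G : Type*} [AddCommGroup G] (A B : Set G) : Prop :=
  ∀ g : G, ∃! ab : G × G, ab.1 ∈ A ∧ ab.2 ∈ B ∧ ab.1 + ab.2 = g

/-- An abelian group is good if in every factorization of it into two factors
at least one factor is periodic. -/
def IsGood (G : Type*) [AddCommGroup G] : Prop :=
  ∀ A B : Set G, IsFactorization A B → periods A ≠ ⊥ ∨ periods B ≠ ⊥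

/-!
Sending `x_i` to the `i`-th generator `e_i` of `G` identifies `ℤ[x₁,…,x_d] ⧸ (x_i^{n_i} - 1)ᵢ`
with the group ring `ℤ[G]`: the kernel is no larger than the ideal because `ℤ[G]` maps back to
the quotient, where each `x_i` is a unit with `x_i^{n_i} = 1`. Under this map `f_C f_S` becomes
`(Σ_{c ∈ C} e_c)(Σ_{s ∈ S} e_s)`, whose coefficient at `v` is the number of neighbours of `v`
in `C`, and `∏ᵢ (1 + x_i + ⋯ + x_i^{n_i-1})` becomes `Σ_{g ∈ G} e_g`. Hence `C` is a total
perfect code iff `f_C f_S - ∏ᵢ (1 + ⋯ + x_i^{n_i-1})` lies in the ideal, and the elements of the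
ideal are exactly the sums `Σ_{I, g} q_I^{(g)}`: the terms with `I = {i}` and `g = 0` already
produce the generators.
-/

open MvPolynomial AddMonoidAlgebra Finset

lemma cayley_adj_iff {G : Type*} [AddGroup G] {S : Set G} (h0 : 0 ∉ S)
    (hinv : ∀ s ∈ S, -s ∈ S) {x y : G} : (cayley S).Adj x y ↔ x - y ∈ S := by
  rw [cayley, SimpleGraph.fromRel_adj]
  refine ⟨fun ⟨_, h⟩ => h.elim (fun h => neg_sub y x ▸ hinv _ h) id, fun h => ⟨?_, .inr h⟩⟩
  rintro rfl
  exact h0 (sub_self x ▸ h)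

lemma isTotalPerfectCode_cayley_iff {G : Type*} [AddGroup G] [DecidableEq G] {S C : Finset G}
    (h0 : 0 ∉ S) (hinv : ∀ s ∈ S, -s ∈ S) :
    IsTotalPerfectCode (cayley (S : Set G)) C ↔ ∀ v, #{c ∈ C | v - c ∈ S} = 1 := by
  simp only [IsTotalPerfectCode, card_eq_one_iff_existsUnique, mem_filter, mem_coe,
    cayley_adj_iff h0 hinv]

lemma ZMod.sum_range_eq_sum_val {M : Type*} [AddCommMonoid M] (m : ℕ) [NeZero m] (f : ℕ → M) :
    ∑ j ∈ range m, f j = ∑ x : ZMod m, f x.val :=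
  sum_nbij' (↑) ZMod.val (by simp) (by simp [ZMod.val_lt])
    (fun j hj => ZMod.val_cast_of_lt (mem_range.1 hj)) (fun x _ => ZMod.natCast_zmod_val x)
    (fun j hj => by rw [ZMod.val_cast_of_lt (mem_range.1 hj)])

namespace AddMonoidAlgebra

variable {R G : Type*} [Semiring R] [DecidableEq G]

lemma coeff_sum_single_one (S : Finset G) (x : G) :
    (∑ s ∈ S, single s (1 : R)).coeff x = if x ∈ S then 1 else 0 := by
  simp [coeff_sum, Finsupp.finsetSum_apply, coeff_single, Finsupp.single_apply]

lemma coeff_sum_single_one_mul_sum_single_one [AddCommGroup G] (C S : Finset G) (v : G) :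
    ((∑ c ∈ C, single c (1 : R)) * ∑ s ∈ S, single s 1).coeff v = (#{c ∈ C | v - c ∈ S} : R) := by
  rw [sum_mul, coeff_sum, Finsupp.finsetSum_apply, ← sum_boole]
  simp only [coeff_single_mul_apply, one_mul, coeff_sum_single_one, neg_add_eq_sub]

lemma sum_single_one_mul_sum_single_one_eq_sum_univ_iff [CharZero R] [AddCommGroup G] [Fintype G]
    (C S : Finset G) :
    (∑ c ∈ C, single c (1 : R)) * ∑ s ∈ S, single s 1 = ∑ g, single g 1 ↔
      ∀ v, #{c ∈ C | v - c ∈ S} = 1 := by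
  rw [← coeff_inj, Finsupp.ext_iff]
  simp only [coeff_sum_single_one_mul_sum_single_one, coeff_sum_single_one, mem_univ, if_true,
    Nat.cast_eq_one]

end AddMonoidAlgebra

namespace PiZMod

variable {ι : Type*} (n : ι → ℕ) (R : Type*) [CommRing R]

noncomputable def liftUnits [Fintype ι] {A : Type*} [CommRing A] [Algebra R A] (u : ι → Aˣ)
    (hu : ∀ i, u i ^ n i = 1) : AddMonoidAlgebra R (∀ i, ZMod (n i)) →ₐ[R] A :=
  lift R A _ <| (Units.coeHom A).comp <| AddMonoidHom.toMultiplicativeLeft <|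
    ∑ i, (ZMod.lift (n i) ⟨zmultiplesHom _ (Additive.ofMul (u i)), by
      simp [← ofMul_pow, hu]⟩).comp (Pi.evalAddMonoidHom _ i)

lemma liftUnits_single_single [Fintype ι] [DecidableEq ι] {A : Type*} [CommRing A] [Algebra R A]
    (u : ι → Aˣ) (hu : ∀ i, u i ^ n i = 1) (i : ι) :
    liftUnits n R u hu (single (Pi.single i 1) 1) = u i := by
  rw [liftUnits, lift_single, one_smul, MonoidHom.comp_apply, Units.coeHom_apply,
    AddMonoidHom.toMultiplicativeLeft_apply_apply, toAdd_ofAdd, AddMonoidHom.finsetSum_apply,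
    Finset.sum_eq_single i (fun j _ hj => by simp [Pi.single_eq_of_ne hj]) (by simp),
    AddMonoidHom.comp_apply, Pi.evalAddMonoidHom_apply, Pi.single_eq_same, ← Int.cast_one,
    ZMod.lift_coe]
  simp

noncomputable def periodIdeal : Ideal (MvPolynomial ι R) :=
  Ideal.span (Set.range fun i => X i ^ n i - 1)

lemma mk_X_pow_eq_one (i : ι) : Ideal.Quotient.mk (periodIdeal n R) (X i ^ n i) = 1 := by
  rw [← sub_eq_zero, ← map_one (Ideal.Quotient.mk _), ← map_sub, Ideal.Quotient.eq_zero_iff_mem]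
  exact Ideal.subset_span ⟨i, rfl⟩

lemma mem_periodIdeal_of_dvd {I : Finset ι} (hI : I.Nonempty) {a q : MvPolynomial ι R}
    (h : a * ∏ i ∈ I, (X i ^ n i - 1) ∣ q) : q ∈ periodIdeal n R := by
  obtain ⟨i, hi⟩ := hI
  exact Ideal.mem_of_dvd _ ((dvd_prod_of_mem _ hi).trans ((dvd_mul_left _ _).trans h))
    (Ideal.subset_span ⟨i, rfl⟩)

section

variable [∀ i, NeZero (n i)]

noncomputable def unitX (i : ι) : (MvPolynomial ι R ⧸ periodIdeal n R)ˣ :=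
  Units.mkOfMulEqOne (Ideal.Quotient.mk _ (X i)) (Ideal.Quotient.mk _ (X i ^ (n i - 1))) <| by
    rw [← map_mul, ← pow_succ', Nat.sub_add_cancel NeZero.one_le, mk_X_pow_eq_one]

lemma unitX_pow (i : ι) : unitX n R i ^ n i = 1 := by
  ext
  rw [Units.val_pow_eq_pow_val, Units.val_one, unitX, Units.val_mkOfMulEqOne, ← map_pow,
    mk_X_pow_eq_one]

end

variable [DecidableEq ι]

noncomputable def toGroupAlgebra : MvPolynomial ι R →ₐ[R] AddMonoidAlgebra R (∀ i, ZMod (n i)) :=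
  aeval fun i => single (Pi.single i 1) 1

lemma toGroupAlgebra_X_pow (i : ι) (k : ℕ) :
    toGroupAlgebra n R (X i ^ k) = single (Pi.single i (k : ZMod (n i))) 1 := by
  rw [map_pow, toGroupAlgebra, aeval_X, single_pow, one_pow, ← Pi.single_smul, nsmul_one]

lemma periodIdeal_le_ker : periodIdeal n R ≤ RingHom.ker (toGroupAlgebra n R) := by
  refine Ideal.span_le.mpr ?_
  rintro _ ⟨i, rfl⟩
  rw [SetLike.mem_coe, RingHom.mem_ker, map_sub, toGroupAlgebra_X_pow, ZMod.natCast_self,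
    Pi.single_zero, map_one, AddMonoidAlgebra.one_def, sub_self]

variable [∀ i, NeZero (n i)] [Fintype ι]

lemma ker_toGroupAlgebra : RingHom.ker (toGroupAlgebra n R) = periodIdeal n R := by
  refine le_antisymm (fun p hp => ?_) (periodIdeal_le_ker n R)
  have hcomp : (liftUnits n R (unitX n R) (unitX_pow n R)).comp (toGroupAlgebra n R) =
      Ideal.Quotient.mkₐ R (periodIdeal n R) :=
    algHom_ext fun i => by simp [toGroupAlgebra, liftUnits_single_single, unitX]
  rw [← Ideal.Quotient.eq_zero_iff_mem, ← Ideal.Quotient.mkₐ_eq_mk R, ← hcomp, AlgHom.comp_apply,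
    RingHom.mem_ker.mp hp, map_zero]

lemma toGroupAlgebra_prod_X_pow_val (g : ∀ i, ZMod (n i)) :
    toGroupAlgebra n R (∏ i, X i ^ (g i).val) = single g 1 := by
  simp only [map_prod, toGroupAlgebra_X_pow, ZMod.natCast_zmod_val, prod_single, prod_const_one,
    Finset.univ_sum_single]

lemma prod_sum_range_X_pow :
    ∏ i, ∑ j ∈ range (n i), (X i : MvPolynomial ι R) ^ j =
      ∑ g : ∀ i, ZMod (n i), ∏ i, X i ^ (g i).val := by
  simp only [ZMod.sum_range_eq_sum_val, Fintype.prod_sum]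

lemma mem_periodIdeal_iff (p : MvPolynomial ι R) :
    p ∈ periodIdeal n R ↔ ∃ q : Finset ι → (∀ i, ZMod (n i)) → MvPolynomial ι R,
      (∀ I : Finset ι, I.Nonempty → ∀ g,
        ((∏ i, X i ^ (g i).val) * ∏ i ∈ I, (X i ^ n i - 1)) ∣ q I g) ∧
      p = ∑ I ∈ univ.filter Finset.Nonempty, ∑ g, q I g := by
  refine ⟨fun hp => ?_, fun ⟨q, hq, hp⟩ => hp ▸ sum_mem fun I hI => sum_mem fun g _ =>
    mem_periodIdeal_of_dvd n R (mem_filter.1 hI).2 (hq I (mem_filter.1 hI).2 g)⟩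
  obtain ⟨c, rfl⟩ := Ideal.mem_span_range_iff_exists_fun.1 hp
  refine ⟨fun I g => if g = 0 then ∑ i, if I = {i} then c i * (X i ^ n i - 1) else 0 else 0,
    fun I _ g => ?_, ?_⟩
  · dsimp only
    split_ifs with hg
    · subst hg
      simp only [Pi.zero_apply, ZMod.val_zero, pow_zero, prod_const_one, one_mul]
      refine dvd_sum fun i _ => ?_
      split_ifs with hI
      · subst hI
        rw [prod_singleton]
        exact dvd_mul_left _ _
      · exact dvd_zero _
    · exact dvd_zero _
  · simp only [sum_ite_eq', mem_univ, if_true]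
    rw [sum_comm]
    simp only [sum_ite_eq', mem_filter, mem_univ, singleton_nonempty, and_self, if_true]

lemma sum_mul_sum_sub_prod_sum_mem_periodIdeal_iff [CharZero R]
    (C S : Finset (∀ i, ZMod (n i))) :
    (∑ c ∈ C, ∏ i, X i ^ (c i).val) * (∑ s ∈ S, ∏ i, X i ^ (s i).val) -
        ∏ i, ∑ j ∈ range (n i), (X i : MvPolynomial ι R) ^ j ∈ periodIdeal n R ↔
      ∀ v, #{c ∈ C | v - c ∈ S} = 1 := by
  rw [← ker_toGroupAlgebra, RingHom.sub_mem_ker_iff, prod_sum_range_X_pow, map_mul]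
  simp only [map_sum, toGroupAlgebra_prod_X_pow_val]
  exact AddMonoidAlgebra.sum_single_one_mul_sum_single_one_eq_sum_univ_iff C S

end PiZMod

open MvPolynomial in
theorem totalPerfectCode_iff_polynomial_general (d : ℕ) (n : Fin d → ℕ)
    [∀ i, NeZero (n i)]
    (S : Finset (∀ i, ZMod (n i))) (h0 : (0 : ∀ i, ZMod (n i)) ∉ S)
    (hinv : ∀ s ∈ S, -s ∈ S) (C : Finset (∀ i, ZMod (n i))) :
    IsTotalPerfectCode (cayley (S : Set (∀ i, ZMod (n i)))) (C : Set (∀ i, ZMod (n i))) ↔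
      ∃ q : Finset (Fin d) → (∀ i, ZMod (n i)) → MvPolynomial (Fin d) ℤ,
        (∀ I : Finset (Fin d), I.Nonempty → ∀ g : ∀ i, ZMod (n i),
          ((∏ i, (X i : MvPolynomial (Fin d) ℤ) ^ (g i).val) *
            ∏ i ∈ I, ((X i : MvPolynomial (Fin d) ℤ) ^ (n i) - 1)) ∣ q I g) ∧
        (∑ c ∈ C, ∏ i, (X i : MvPolynomial (Fin d) ℤ) ^ (c i).val) *
            (∑ s ∈ S, ∏ i, (X i : MvPolynomial (Fin d) ℤ) ^ (s i).val) =
          (∑ I ∈ Finset.univ.filter (Finset.Nonempty (α := Fin d)),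
              ∑ g : ∀ i, ZMod (n i), q I g) +
            ∏ i, ∑ j ∈ Finset.range (n i), (X i : MvPolynomial (Fin d) ℤ) ^ j := by
  rw [isTotalPerfectCode_cayley_iff h0 hinv,
    ← PiZMod.sum_mul_sum_sub_prod_sum_mem_periodIdeal_iff n ℤ, PiZMod.mem_periodIdeal_iff]
  simp only [sub_eq_iff_eq_add]

open MvPolynomial in
/-- Lemma 4.7: for `G = ℤ_{n₁} × ⋯ × ℤ_{n_d}` and an inverse-closed subset `S` of
`G ∖ {0}`, a subset `C` of `G` is a total perfect code in `Cay(G, S)` iff there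
are integer polynomials `q_I^{(g)}`, each divisible by
`(∏ i, x_i^{g_i}) ⬝ ∏_{i ∈ I} (x_i^{n_i} - 1)`, with
`f_C ⬝ f_S = Σ_{∅ ≠ I} Σ_g q_I^{(g)} + ∏ i (1 + x_i + ⋯ + x_i^{n_i - 1})`. -/
theorem totalPerfectCode_iff_polynomial (d : ℕ) (hd : 1 ≤ d) (n : Fin d → ℕ)
    (hn : ∀ i, 2 ≤ n i) [∀ i, NeZero (n i)]
    (S : Finset (∀ i, ZMod (n i))) (h0 : (0 : ∀ i, ZMod (n i)) ∉ S)
    (hinv : ∀ s ∈ S, -s ∈ S) (C : Finset (∀ i, ZMod (n i))) :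
    IsTotalPerfectCode (cayley (S : Set (∀ i, ZMod (n i)))) (C : Set (∀ i, ZMod (n i))) ↔
      ∃ q : Finset (Fin d) → (∀ i, ZMod (n i)) → MvPolynomial (Fin d) ℤ,
        (∀ I : Finset (Fin d), I.Nonempty → ∀ g : ∀ i, ZMod (n i),
          ((∏ i, (X i : MvPolynomial (Fin d) ℤ) ^ (g i).val) *
            ∏ i ∈ I, ((X i : MvPolynomial (Fin d) ℤ) ^ (n i) - 1)) ∣ q I g) ∧
        (∑ c ∈ C, ∏ i, (X i : MvPolynomial (Fin d) ℤ) ^ (c i).val) *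
            (∑ s ∈ S, ∏ i, (X i : MvPolynomial (Fin d) ℤ) ^ (s i).val) =
          (∑ I ∈ Finset.univ.filter (Finset.Nonempty (α := Fin d)),
              ∑ g : ∀ i, ZMod (n i), q I g) +
            ∏ i, ∑ j ∈ Finset.range (n i), (X i : MvPolynomial (Fin d) ℤ) ^ j :=
  totalPerfectCode_iff_polynomial_general d n S h0 hinv C
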